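/- Let A be an action set with partition {A^r, A^l, A^bi}. The axioms of A_CC^≡ are sound for covariant-contravariant simulation equivalence: for all closed BCCSP processes x, y, all a, b ∈ A^r and all a', b' ∈ A^l, we have a.(x + b.y) ≡_CC a.(x + b.y) + a.x, a.x ≡_CC a.x + a.(x + b'.y), a'.x ≡_CC a'.x + a'.(x + b.y), and a'.(x + b'.y) ≡_CC a'.(x + b'.y) + a'.x. -/

import Mathlib

inductive Proc (A : Type) : Type
  | nil : Proc A
  | pre : A → Proc A → Proc A
  | add : Proc A → Proc A → Proc A

inductive Step {A : Type} : Proc A → A → Proc A → Prop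
  | pre (a : A) (p : Proc A) : Step (.pre a p) a p
  | addL {p : Proc A} {a : A} {p' : Proc A} (q : Proc A) :
      Step p a p' → Step (.add p q) a p'
  | addR {q : Proc A} {a : A} {q' : Proc A} (p : Proc A) :
      Step q a q' → Step (.add p q) a q'

/-- `initials p` is the set `I(p)` of actions that `p` can immediately perform. -/
def initials {A : Type} (p : Proc A) : Set A := {a | ∃ p', Step p a p'}

/-- `{Ar, Al, Abi}` is a partition of the action set `A` (cells may be empty). -/
def IsPartition {A : Type} (Ar Al Abi : Set A) : Prop :=
  (Ar ∪ Al ∪ Abi = Set.univ) ∧ Disjoint Ar Al ∧ Disjoint Ar Abi ∧ Disjoint Al Abi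

/-- Covariant-contravariant simulation w.r.t. covariant actions `Ar`,
contravariant actions `Al` and bivariant actions `Abi`. -/
def IsCCSim {A : Type} (Ar Al Abi : Set A) (S : Proc A → Proc A → Prop) : Prop :=
  ∀ p q, S p q →
    (∀ a ∈ Ar ∪ Abi, ∀ p', Step p a p' → ∃ q', Step q a q' ∧ S p' q') ∧
    (∀ a ∈ Al ∪ Abi, ∀ q', Step q a q' → ∃ p', Step p a p' ∧ S p' q')

/-- The covariant-contravariant simulation preorder `p ≲_CC q`. -/
def ccLe {A : Type} (Ar Al Abi : Set A) (p q : Proc A) : Prop :=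
  ∃ S, IsCCSim Ar Al Abi S ∧ S p q

/-- Covariant-contravariant simulation equivalence `p ≡_CC q`. -/
def ccEq {A : Type} (Ar Al Abi : Set A) (p q : Proc A) : Prop :=
  ccLe Ar Al Abi p q ∧ ccLe Ar Al Abi q p

/-- Conformance simulation. -/
def IsConfSim {A : Type} (R : Proc A → Proc A → Prop) : Prop :=
  ∀ p q, R p q →
    initials p ⊆ initials q ∧
    (∀ a q', Step q a q' → a ∈ initials p → ∃ p', Step p a p' ∧ R p' q')

/-- The conformance simulation preorder `p ≲_CS q`. -/
def csLe {A : Type} (p q : Proc A) : Prop := ∃ R, IsConfSim R ∧ R p q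

/-- Conformance simulation equivalence `p ≡_CS q`. -/
def csEq {A : Type} (p q : Proc A) : Prop := csLe p q ∧ csLe q p

/-- The conformance precongruence `p ⊑_CS q`. -/
def csPre {A : Type} (p q : Proc A) : Prop := csLe p q ∧ initials q ⊆ initials p

/-- Plain simulation. -/
def IsSim {A : Type} (S : Proc A → Proc A → Prop) : Prop :=
  ∀ p q, S p q → ∀ a p', Step p a p' → ∃ q', Step q a q' ∧ S p' q'

/-- The plain simulation preorder `p ≲_S q`. -/
def simLe {A : Type} (p q : Proc A) : Prop := ∃ S, IsSim S ∧ S p q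

/-- Ready simulation. -/
def IsRSim {A : Type} (S : Proc A → Proc A → Prop) : Prop :=
  ∀ p q, S p q → initials p = initials q ∧
    (∀ a p', Step p a p' → ∃ q', Step q a q' ∧ S p' q')

/-- The ready simulation preorder `p ≲_RS q`. -/
def rsLe {A : Type} (p q : Proc A) : Prop := ∃ S, IsRSim S ∧ S p q

/-- Ready conformance simulation: a conformance simulation that additionally
guarantees `I(q) ⊆ I(p)` for all related pairs. -/
def IsRCSim {A : Type} (R : Proc A → Proc A → Prop) : Prop :=
  IsConfSim R ∧ ∀ p q, R p q → initials q ⊆ initials p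

/-- The ready conformance simulation preorder `p ≲_RCS q`. -/
def rcsLe {A : Type} (p q : Proc A) : Prop := ∃ R, IsRCSim R ∧ R p q

/-- Open BCCSP terms (with variables indexed by `ℕ`). -/
inductive Term (A : Type) : Type
  | var : ℕ → Term A
  | nil : Term A
  | pre : A → Term A → Term A
  | add : Term A → Term A → Term A

/-- Closed substitution applied to an open term. -/
def Term.subst {A : Type} (σ : ℕ → Proc A) : Term A → Proc A
  | .var n => σ n
  | .nil => .nil
  | .pre a t => .pre a (t.subst σ)
  | .add s t => .add (s.subst σ) (t.subst σ)

/-- View a closed process as an (open) term. -/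
def Proc.toTerm {A : Type} : Proc A → Term A
  | .nil => .nil
  | .pre a p => .pre a p.toTerm
  | .add p q => .add p.toTerm q.toTerm

/-- Inequational derivability (between closed processes) from a set `E` of
inequations between open terms: the least relation containing all substitution
instances of `E` and closed under reflexivity, transitivity and the congruence
rules for prefixing and `+`. -/
inductive DerivLe {A : Type} (E : Set (Term A × Term A)) : Proc A → Proc A → Prop
  | ax (l r : Term A) (σ : ℕ → Proc A) : (l, r) ∈ E → DerivLe E (l.subst σ) (r.subst σ)
  | refl (p : Proc A) : DerivLe E p p
  | trans {p q r : Proc A} : DerivLe E p q → DerivLe E q r → DerivLe E p r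
  | pre (a : A) {p q : Proc A} : DerivLe E p q → DerivLe E (.pre a p) (.pre a q)
  | add {p q r s : Proc A} : DerivLe E p q → DerivLe E r s → DerivLe E (.add p r) (.add q s)

/-- Equational derivability (between closed processes) from a set `E` of
equations between open terms. -/
inductive DerivEq {A : Type} (E : Set (Term A × Term A)) : Proc A → Proc A → Prop
  | ax (l r : Term A) (σ : ℕ → Proc A) : (l, r) ∈ E → DerivEq E (l.subst σ) (r.subst σ)
  | refl (p : Proc A) : DerivEq E p p
  | symm {p q : Proc A} : DerivEq E p q → DerivEq E q p
  | trans {p q r : Proc A} : DerivEq E p q → DerivEq E q r → DerivEq E p r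
  | pre (a : A) {p q : Proc A} : DerivEq E p q → DerivEq E (.pre a p) (.pre a q)
  | add {p q r s : Proc A} : DerivEq E p q → DerivEq E r s → DerivEq E (.add p r) (.add q s)

/-- Substitution of (possibly open) terms for variables. -/
def Term.substT {A : Type} (σ : ℕ → Term A) : Term A → Term A
  | .var n => σ n
  | .nil => .nil
  | .pre a t => .pre a (t.substT σ)
  | .add s t => .add (s.substT σ) (t.substT σ)

/-- Equational derivability between open terms from a set `E` of equations. -/
inductive TDerivEq {A : Type} (E : Set (Term A × Term A)) : Term A → Term A → Prop
  | ax (l r : Term A) (σ : ℕ → Term A) : (l, r) ∈ E → TDerivEq E (l.substT σ) (r.substT σ)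
  | refl (t : Term A) : TDerivEq E t t
  | symm {s t : Term A} : TDerivEq E s t → TDerivEq E t s
  | trans {s t u : Term A} : TDerivEq E s t → TDerivEq E t u → TDerivEq E s u
  | pre (a : A) {s t : Term A} : TDerivEq E s t → TDerivEq E (.pre a s) (.pre a t)
  | add {s t u v : Term A} : TDerivEq E s t → TDerivEq E u v → TDerivEq E (.add s u) (.add t v)

/-- The bisimulation axioms B1–B4, as equations. -/
def BEqns (A : Type) : Set (Term A × Term A) :=
  { (.add (.var 0) (.var 1), .add (.var 1) (.var 0)),
    (.add (.add (.var 0) (.var 1)) (.var 2), .add (.var 0) (.add (.var 1) (.var 2))),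
    (.add (.var 0) (.var 0), .var 0),
    (.add (.var 0) .nil, .var 0) }

/-- The bisimulation axioms B1–B4, each used as two inequations. -/
def BIneqs (A : Type) : Set (Term A × Term A) := BEqns A ∪ Prod.swap '' BEqns A


/-! Under `≲_CC` both `p ≲ r ∧ q ≲ r → p + q ≲ r` and `p ≲ q ∧ p ≲ r → p ≲ q + r`
hold. Moreover a summand whose initial actions are all covariant may be added on the
larger side for free, and one whose initial actions are all contravariant on the smaller
side. In each axiom one inequality is such a free summand; the other reduces, by the two
bounds above and monotonicity of prefixing, to `x ≲ x + b.y` or `x + b'.y ≲ x`, again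
free summands. -/

section CovariantContravariant

variable {A : Type} {Ar Al Abi : Set A}

theorem IsPartition.notMem_Al_union_Abi (hpart : IsPartition Ar Al Abi) {c : A}
    (hc : c ∈ Ar) : c ∉ Al ∪ Abi := by
  obtain ⟨-, hrl, hrbi, -⟩ := hpart
  rintro (h | h)
  · exact Set.disjoint_left.mp hrl hc h
  · exact Set.disjoint_left.mp hrbi hc h

theorem IsPartition.notMem_Ar_union_Abi (hpart : IsPartition Ar Al Abi) {c : A}
    (hc : c ∈ Al) : c ∉ Ar ∪ Abi := by
  obtain ⟨-, hrl, -, hlbi⟩ := hpart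
  rintro (h | h)
  · exact Set.disjoint_left.mp hrl h hc
  · exact Set.disjoint_left.mp hlbi hc h

theorem initials_pre (c : A) (u : Proc A) : initials (.pre c u) = {c} := by
  ext a
  constructor
  · rintro ⟨_, h⟩
    cases h
    rfl
  · rintro rfl
    exact ⟨u, Step.pre _ u⟩

theorem isCCSim_ccLe : IsCCSim Ar Al Abi (ccLe Ar Al Abi) := by
  rintro p q ⟨S, hS, hpq⟩
  obtain ⟨hforth, hback⟩ := hS p q hpq
  exact ⟨fun a ha p' hp => (hforth a ha p' hp).imp fun _ h => ⟨h.1, S, hS, h.2⟩,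
    fun a ha q' hq => (hback a ha q' hq).imp fun _ h => ⟨h.1, S, hS, h.2⟩⟩

/-- Coinduction up to `≲_CC`: one round of the transfer game, with the residual
processes related by `≲_CC`, suffices. -/
theorem ccLe_of_transfer {p q : Proc A}
    (hforth : ∀ a ∈ Ar ∪ Abi, ∀ p', Step p a p' →
      ∃ q', Step q a q' ∧ ccLe Ar Al Abi p' q')
    (hback : ∀ a ∈ Al ∪ Abi, ∀ q', Step q a q' →
      ∃ p', Step p a p' ∧ ccLe Ar Al Abi p' q') :
    ccLe Ar Al Abi p q := by
  refine ⟨fun p' q' => ccLe Ar Al Abi p' q' ∨ (p' = p ∧ q' = q), ?_, Or.inr ⟨rfl, rfl⟩⟩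
  rintro p' q' (h | ⟨rfl, rfl⟩)
  · obtain ⟨hforth', hback'⟩ := isCCSim_ccLe p' q' h
    exact ⟨fun a ha r hr => (hforth' a ha r hr).imp fun _ h => ⟨h.1, Or.inl h.2⟩,
      fun a ha r hr => (hback' a ha r hr).imp fun _ h => ⟨h.1, Or.inl h.2⟩⟩
  · exact ⟨fun a ha r hr => (hforth a ha r hr).imp fun _ h => ⟨h.1, Or.inl h.2⟩,
      fun a ha r hr => (hback a ha r hr).imp fun _ h => ⟨h.1, Or.inl h.2⟩⟩

theorem ccLe_refl (p : Proc A) : ccLe Ar Al Abi p p := by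
  refine ⟨Eq, ?_, rfl⟩
  rintro p _ rfl
  exact ⟨fun _ _ p' h => ⟨p', h, rfl⟩, fun _ _ q' h => ⟨q', h, rfl⟩⟩

theorem pre_ccLe_pre (c : A) {u v : Proc A} (huv : ccLe Ar Al Abi u v) :
    ccLe Ar Al Abi (.pre c u) (.pre c v) := by
  refine ccLe_of_transfer (fun a _ p' hp => ?_) (fun a _ q' hq => ?_)
  · cases hp
    exact ⟨v, Step.pre c v, huv⟩
  · cases hq
    exact ⟨u, Step.pre c u, huv⟩

theorem add_ccLe {p q r : Proc A} (hp : ccLe Ar Al Abi p r) (hq : ccLe Ar Al Abi q r) :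
    ccLe Ar Al Abi (.add p q) r := by
  refine ccLe_of_transfer (fun a ha s hs => ?_) (fun a ha r' hr => ?_)
  · cases hs with
    | addL _ h => exact (isCCSim_ccLe p r hp).1 a ha s h
    | addR _ h => exact (isCCSim_ccLe q r hq).1 a ha s h
  · obtain ⟨p', hp', hpr⟩ := (isCCSim_ccLe p r hp).2 a ha r' hr
    exact ⟨p', Step.addL q hp', hpr⟩

theorem ccLe_add {p q r : Proc A} (hq : ccLe Ar Al Abi p q) (hr : ccLe Ar Al Abi p r) :
    ccLe Ar Al Abi p (.add q r) := by
  refine ccLe_of_transfer (fun a ha p' hp => ?_) (fun a ha s hs => ?_)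
  · obtain ⟨q', hq', hpq⟩ := (isCCSim_ccLe p q hq).1 a ha p' hp
    exact ⟨q', Step.addL r hq', hpq⟩
  · cases hs with
    | addL _ h => exact (isCCSim_ccLe p q hq).2 a ha s h
    | addR _ h => exact (isCCSim_ccLe p r hr).2 a ha s h

theorem ccLe_self_add (p : Proc A) {q : Proc A} (hq : Disjoint (initials q) (Al ∪ Abi)) :
    ccLe Ar Al Abi p (.add p q) := by
  refine ccLe_of_transfer (fun a _ p' hp => ⟨p', Step.addL q hp, ccLe_refl p'⟩)
    (fun a ha s hs => ?_)
  cases hs with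
  | addL _ h => exact ⟨s, h, ccLe_refl s⟩
  | addR _ h => exact absurd ha (Set.disjoint_left.mp hq ⟨s, h⟩)

theorem self_add_ccLe (p : Proc A) {q : Proc A} (hq : Disjoint (initials q) (Ar ∪ Abi)) :
    ccLe Ar Al Abi (.add p q) p := by
  refine ccLe_of_transfer (fun a ha s hs => ?_)
    (fun a _ p' hp => ⟨p', Step.addL q hp, ccLe_refl p'⟩)
  cases hs with
  | addL _ h => exact ⟨s, h, ccLe_refl s⟩
  | addR _ h => exact absurd ha (Set.disjoint_left.mp hq ⟨s, h⟩)

end CovariantContravariant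

/-- Soundness of the axioms S1–S4 of `A_CC^≡` for `≡_CC`. -/
theorem ACCEq_sound {A : Type} (Ar Al Abi : Set A)
    (hpart : IsPartition Ar Al Abi) (x y : Proc A)
    (a b a' b' : A) (ha : a ∈ Ar) (hb : b ∈ Ar) (ha' : a' ∈ Al) (hb' : b' ∈ Al) :
    ccEq Ar Al Abi (.pre a (.add x (.pre b y)))
      (.add (.pre a (.add x (.pre b y))) (.pre a x)) ∧
    ccEq Ar Al Abi (.pre a x)
      (.add (.pre a x) (.pre a (.add x (.pre b' y)))) ∧
    ccEq Ar Al Abi (.pre a' x)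
      (.add (.pre a' x) (.pre a' (.add x (.pre b y)))) ∧
    ccEq Ar Al Abi (.pre a' (.add x (.pre b' y)))
      (.add (.pre a' (.add x (.pre b' y))) (.pre a' x)) := by
  have covariant {c : A} (hc : c ∈ Ar) (u : Proc A) :
      Disjoint (initials (.pre c u)) (Al ∪ Abi) := by
    rw [initials_pre, Set.disjoint_singleton_left]
    exact hpart.notMem_Al_union_Abi hc
  have contravariant {c : A} (hc : c ∈ Al) (u : Proc A) :
      Disjoint (initials (.pre c u)) (Ar ∪ Abi) := by
    rw [initials_pre, Set.disjoint_singleton_left]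
    exact hpart.notMem_Ar_union_Abi hc
  have x_le_add_b : ccLe Ar Al Abi x (.add x (.pre b y)) := ccLe_self_add x (covariant hb y)
  have add_b'_le_x : ccLe Ar Al Abi (.add x (.pre b' y)) x :=
    self_add_ccLe x (contravariant hb' y)
  exact ⟨⟨ccLe_self_add _ (covariant ha x),
      add_ccLe (ccLe_refl _) (pre_ccLe_pre a x_le_add_b)⟩,
    ⟨ccLe_self_add _ (covariant ha _), add_ccLe (ccLe_refl _) (pre_ccLe_pre a add_b'_le_x)⟩,
    ⟨ccLe_add (ccLe_refl _) (pre_ccLe_pre a' x_le_add_b),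
      self_add_ccLe _ (contravariant ha' _)⟩,
    ⟨ccLe_add (ccLe_refl _) (pre_ccLe_pre a' add_b'_le_x),
      self_add_ccLe _ (contravariant ha' x)⟩⟩
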